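/- arXiv:1106.3818 — 11 statements merged into one kernel-verified Lean document; each statement's English description precedes it below -/
import Mathlib

section
/- Let S be a nonempty set and J a predicate (equation) on S that is consistent, i.e. there exists some x ∈ S with J(x). Then there exists a function f : S → S satisfying the reproductivity condition f ∘ f = f such that for all x ∈ S, J(x) holds if and only if x = f(x). -/
theorem reproductive_exists {S : Type*} [Nonempty S] (J : S → Prop)
    (hcons : ∃ x, J x) :
    ∃ f : S → S, f ∘ f = f ∧ ∀ x, J x ↔ x = f x := by
  classical
  obtain ⟨x₀, hx₀⟩ := hcons
  refine ⟨fun x => if J x then x else x₀, ?_, ?_⟩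
  · funext x
    by_cases h : J x <;> simp [h, hx₀]
  · intro x
    constructor
    · intro h; simp [h]
    · intro h
      by_cases hx : J x
      · exact hx
      · simp only [hx, if_false] at h; exact h ▸ hx₀
end

section
/- Let A be an m×n complex matrix, B a p×q complex matrix, C an m×q complex matrix, and let A⁽¹⁾ and B⁽¹⁾ be {1}-inverses of A and B respectively. Then the matrix equation A·X·B = C has a solution X (an n×p complex matrix) if and only if A·A⁽¹⁾·C·B⁽¹⁾·B = C. -/
theorem penrose_consistency {m n p q : ℕ}
    (A : Matrix (Fin m) (Fin n) ℂ) (B : Matrix (Fin p) (Fin q) ℂ)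
    (C : Matrix (Fin m) (Fin q) ℂ)
    (A1 : Matrix (Fin n) (Fin m) ℂ) (B1 : Matrix (Fin q) (Fin p) ℂ)
    (hA1 : A * A1 * A = A) (hB1 : B * B1 * B = B) :
    (∃ X : Matrix (Fin n) (Fin p) ℂ, A * X * B = C) ↔
      A * A1 * C * B1 * B = C := by
  constructor
  · rintro ⟨X, rfl⟩
    have : A * A1 * (A * X * B) * B1 * B = (A * A1 * A) * X * (B * B1 * B) := by
      simp only [Matrix.mul_assoc]
    rw [this, hA1, hB1]
  · intro h
    refine ⟨A1 * C * B1, ?_⟩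
    have : A * (A1 * C * B1) * B = A * A1 * C * B1 * B := by
      simp only [Matrix.mul_assoc]
    rw [this, h]
end

section
/- Let A be an m×n complex matrix, B a p×q complex matrix, C an m×q complex matrix, and let A⁽¹⁾ and B⁽¹⁾ be {1}-inverses of A and B respectively such that A·A⁽¹⁾·C·B⁽¹⁾·B = C. Then the set of solutions of A·X·B = C is exactly {A⁽¹⁾·C·B⁽¹⁾ + Y − A⁽¹⁾·A·Y·B·B⁽¹⁾ | Y an arbitrary n×p complex matrix}. -/
theorem penrose_general_solution {m n p q : ℕ}
    (A : Matrix (Fin m) (Fin n) ℂ) (B : Matrix (Fin p) (Fin q) ℂ)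
    (C : Matrix (Fin m) (Fin q) ℂ)
    (A1 : Matrix (Fin n) (Fin m) ℂ) (B1 : Matrix (Fin q) (Fin p) ℂ)
    (hA1 : A * A1 * A = A) (hB1 : B * B1 * B = B)
    (hcons : A * A1 * C * B1 * B = C) :
    {X : Matrix (Fin n) (Fin p) ℂ | A * X * B = C} =
      Set.range (fun Y : Matrix (Fin n) (Fin p) ℂ =>
        A1 * C * B1 + Y - A1 * A * Y * B * B1) := by
  ext X
  simp only [Set.mem_setOf_eq, Set.mem_range]
  constructor
  · intro h
    refine ⟨X, ?_⟩
    have h1 : A1 * C * B1 = A1 * A * X * B * B1 := by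
      rw [← h]; simp [Matrix.mul_assoc]
    rw [h1]; abel
  · rintro ⟨Y, rfl⟩
    have e2 : A * (A1 * A * Y * B * B1) * B = A * Y * B := by
      calc A * (A1 * A * Y * B * B1) * B
          = (A * A1 * A) * Y * (B * B1 * B) := by simp [Matrix.mul_assoc]
        _ = A * Y * B := by rw [hA1, hB1]
    have e1 : A * (A1 * C * B1) * B = C := by
      simpa [Matrix.mul_assoc] using hcons
    calc A * (A1 * C * B1 + Y - A1 * A * Y * B * B1) * B
        = A * (A1 * C * B1) * B + A * Y * B - A * (A1 * A * Y * B * B1) * B := by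
          simp [Matrix.mul_add, Matrix.mul_sub, Matrix.add_mul, Matrix.sub_mul]
      _ = C := by rw [e1, e2]; abel
end

section
/- Let A be an m×n complex matrix, B a p×q complex matrix, C an m×q complex matrix, A⁽¹⁾ and B⁽¹⁾ {1}-inverses of A and B, and let X₀ be an n×p complex matrix with A·X₀·B = C. Then for every n×p complex matrix X, A·X·B = C holds if and only if there exists an n×p complex matrix Y with X = X₀ + Y − A⁽¹⁾·A·Y·B·B⁽¹⁾. -/
theorem general_solution_from_particular {m n p q : ℕ}
    (A : Matrix (Fin m) (Fin n) ℂ) (B : Matrix (Fin p) (Fin q) ℂ)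
    (C : Matrix (Fin m) (Fin q) ℂ)
    (A1 : Matrix (Fin n) (Fin m) ℂ) (B1 : Matrix (Fin q) (Fin p) ℂ)
    (hA1 : A * A1 * A = A) (hB1 : B * B1 * B = B)
    (X0 : Matrix (Fin n) (Fin p) ℂ) (hX0 : A * X0 * B = C) :
    ∀ X : Matrix (Fin n) (Fin p) ℂ,
      A * X * B = C ↔ ∃ Y : Matrix (Fin n) (Fin p) ℂ,
        X = X0 + Y - A1 * A * Y * B * B1 := by
  intro X
  constructor
  · intro hX
    refine ⟨X - X0, ?_⟩
    have h0 : A * (X - X0) * B = 0 := by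
      rw [Matrix.mul_sub, Matrix.sub_mul, hX, hX0, sub_self]
    have h1 : A1 * A * (X - X0) * B * B1 = A1 * ((A * (X - X0) * B) * B1) := by
      simp only [Matrix.mul_assoc]
    rw [h1, h0, Matrix.zero_mul, Matrix.mul_zero, sub_zero]
    abel
  · rintro ⟨Y, rfl⟩
    have key : A * (A1 * A * Y * B * B1) * B = A * Y * B := by
      calc A * (A1 * A * Y * B * B1) * B
          = (A * A1 * A) * (Y * (B * B1 * B)) := by simp only [Matrix.mul_assoc]
        _ = A * (Y * B) := by rw [hA1, hB1]
        _ = A * Y * B := by rw [Matrix.mul_assoc]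
    rw [Matrix.mul_sub, Matrix.sub_mul, Matrix.mul_add, Matrix.add_mul, key, hX0]
    abel
end

section
/- Let A be an m×n complex matrix, B a p×q complex matrix, C an m×q complex matrix, A⁽¹⁾ and B⁽¹⁾ {1}-inverses of A and B, and let X₀ be an n×p complex matrix with A·X₀·B = C. Define g on n×p complex matrices by g(Y) = X₀ + Y − A⁽¹⁾·A·Y·B·B⁽¹⁾. Then g ∘ g = g if and only if X₀ = A⁽¹⁾·C·B⁽¹⁾. -/
theorem reproductive_iff_particular_eq {m n p q : ℕ}
    (A : Matrix (Fin m) (Fin n) ℂ) (B : Matrix (Fin p) (Fin q) ℂ)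
    (C : Matrix (Fin m) (Fin q) ℂ)
    (A1 : Matrix (Fin n) (Fin m) ℂ) (B1 : Matrix (Fin q) (Fin p) ℂ)
    (hA1 : A * A1 * A = A) (hB1 : B * B1 * B = B)
    (X0 : Matrix (Fin n) (Fin p) ℂ) (hX0 : A * X0 * B = C)
    (g : Matrix (Fin n) (Fin p) ℂ → Matrix (Fin n) (Fin p) ℂ)
    (hg : ∀ Y, g Y = X0 + Y - A1 * A * Y * B * B1) :
    g ∘ g = g ↔ X0 = A1 * C * B1 := by
  have hX0' : A1 * A * X0 * B * B1 = A1 * C * B1 := by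
    rw [← hX0]; simp only [Matrix.mul_assoc]
  constructor
  · intro h
    have h0 : g (g 0) = g 0 := congrFun h 0
    have hg0 : g 0 = X0 := by simp [hg 0, Matrix.mul_zero, Matrix.zero_mul]
    rw [hg0, hg X0] at h0
    have : A1 * A * X0 * B * B1 = X0 := by
      have := h0
      linear_combination (norm := abel) -this
    rw [← this, hX0']
  · intro h
    have hPX : A1 * A * X0 * B * B1 = X0 := by rw [hX0', ← h]
    have key : ∀ Z : Matrix (Fin n) (Fin p) ℂ,
        A1 * A * (A1 * A * Z * B * B1) * B * B1 = A1 * A * Z * B * B1 := by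
      intro Z
      have hA1' : A * (A1 * A) = A := by rw [← Matrix.mul_assoc, hA1]
      have hB1' : B * B1 * B = B := hB1
      calc A1 * A * (A1 * A * Z * B * B1) * B * B1
          = A1 * (A * (A1 * A)) * Z * (B * B1 * B) * B1 := by
            simp only [Matrix.mul_assoc]
        _ = A1 * A * Z * B * B1 := by rw [hA1', hB1']
    funext Y
    simp only [Function.comp_apply, hg]
    have expand : A1 * A * (X0 + Y - A1 * A * Y * B * B1) * B * B1
        = A1 * A * X0 * B * B1 + A1 * A * Y * B * B1
          - A1 * A * (A1 * A * Y * B * B1) * B * B1 := by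
      simp only [Matrix.mul_add, Matrix.mul_sub, Matrix.add_mul, Matrix.sub_mul]
    rw [expand, hPX, key]
    abel
end

section
/- Let A be an n×n complex matrix and B a {1}-inverse of A. Then for every n×n complex matrix X, X·A = A holds if and only if there exists an n×n complex matrix Y with X = I + Y − Y·A·B, where I is the n×n identity matrix. -/
theorem presic_XA_eq_A {n : ℕ} (A B : Matrix (Fin n) (Fin n) ℂ)
    (hB : A * B * A = A) :
    ∀ X : Matrix (Fin n) (Fin n) ℂ,
      X * A = A ↔ ∃ Y : Matrix (Fin n) (Fin n) ℂ, X = 1 + Y - Y * A * B := by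
  intro X
  constructor
  · intro h
    refine ⟨X - 1, ?_⟩
    have h2 : (X - 1) * A * B = 0 := by
      simp [sub_mul, h]
    rw [h2]; abel
  · rintro ⟨Y, rfl⟩
    have h3 : Y * A * B * A = Y * A := by
      rw [mul_assoc, mul_assoc, ← mul_assoc A B A, hB]
    simp [sub_mul, add_mul, h3]
end

section
/- Let A be an n×n complex matrix and B a {1}-inverse of A. Then for every n×n complex matrix X, A·X = A holds if and only if there exists an n×n complex matrix Y with X = B·A + Y − B·A·Y. Moreover the map f(Y) = B·A + Y − B·A·Y satisfies f ∘ f = f. -/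
theorem haveric_AX_eq_A {n : ℕ} (A B : Matrix (Fin n) (Fin n) ℂ)
    (hB : A * B * A = A) :
    (∀ X : Matrix (Fin n) (Fin n) ℂ,
      A * X = A ↔ ∃ Y : Matrix (Fin n) (Fin n) ℂ, X = B * A + Y - B * A * Y) ∧
    (fun Y : Matrix (Fin n) (Fin n) ℂ => B * A + Y - B * A * Y) ∘
      (fun Y : Matrix (Fin n) (Fin n) ℂ => B * A + Y - B * A * Y) =
    (fun Y : Matrix (Fin n) (Fin n) ℂ => B * A + Y - B * A * Y) := by
  have hBA : B * A * (B * A) = B * A := by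
    calc B * A * (B * A) = B * (A * B * A) := by noncomm_ring
    _ = B * A := by rw [hB]
  constructor
  · intro X
    constructor
    · intro hX
      refine ⟨X, ?_⟩
      have : B * A * X = B * A := by
        calc B * A * X = B * (A * X) := by rw [Matrix.mul_assoc]
        _ = B * A := by rw [hX]
      rw [this]; abel
    · rintro ⟨Y, rfl⟩
      have h1 : A * (B * A) = A := by rw [← Matrix.mul_assoc, hB]
      calc A * (B * A + Y - B * A * Y)
          = A * (B * A) + A * Y - A * (B * A) * Y := by noncomm_ring
        _ = A := by rw [h1]; abel
  · funext Y
    simp only [Function.comp_apply]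
    have : B * A * (B * A + Y - B * A * Y) = B * A := by
      calc B * A * (B * A + Y - B * A * Y)
          = B * A * (B * A) + B * A * Y - B * A * (B * A) * Y := by noncomm_ring
        _ = B * A := by rw [hBA]; abel
    rw [this]; abel
end

section
/- Let A be an n×n complex matrix and B a {1}-inverse of A. Then for every n×n complex matrix X, X·A = A holds if and only if there exists an n×n complex matrix Y with X = A·B + Y − Y·A·B. Moreover the map f(Y) = A·B + Y − Y·A·B satisfies f ∘ f = f. -/
theorem haveric_XA_eq_A {n : ℕ} (A B : Matrix (Fin n) (Fin n) ℂ)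
    (hB : A * B * A = A) :
    (∀ X : Matrix (Fin n) (Fin n) ℂ,
      X * A = A ↔ ∃ Y : Matrix (Fin n) (Fin n) ℂ, X = A * B + Y - Y * A * B) ∧
    (fun Y : Matrix (Fin n) (Fin n) ℂ => A * B + Y - Y * A * B) ∘
      (fun Y : Matrix (Fin n) (Fin n) ℂ => A * B + Y - Y * A * B) =
    (fun Y : Matrix (Fin n) (Fin n) ℂ => A * B + Y - Y * A * B) := by
  constructor
  · intro X
    constructor
    · intro hX
      exact ⟨X, by rw [mul_assoc, ← mul_assoc X A B, hX]; abel⟩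
    · rintro ⟨Y, rfl⟩
      have : Y * A * B * A = Y * A := by
        rw [mul_assoc (Y * A) B A, mul_assoc Y A (B * A), ← mul_assoc A B A, hB]
      rw [sub_mul, add_mul, hB, this]
      abel
  · funext Y
    simp only [Function.comp_apply]
    have h : (A * B + Y - Y * A * B) * A * B = A * B := by
      rw [sub_mul, add_mul, sub_mul, add_mul, hB,
        mul_assoc (Y * A) B A, mul_assoc Y A (B * A), ← mul_assoc A B A, hB]
      abel
    rw [h]
    abel
end

section
/- Let A be an n×n complex matrix and B a {1}-inverse of A. Then for every n×n complex matrix X, A·X·A = A holds if and only if there exists an n×n complex matrix Y with X = B·A·B + Y − B·A·Y·A·B. Moreover the map f(Y) = B·A·B + Y − B·A·Y·A·B satisfies f ∘ f = f. -/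
theorem haveric_AXA_eq_A {n : ℕ} (A B : Matrix (Fin n) (Fin n) ℂ)
    (hB : A * B * A = A) :
    (∀ X : Matrix (Fin n) (Fin n) ℂ,
      A * X * A = A ↔ ∃ Y : Matrix (Fin n) (Fin n) ℂ,
        X = B * A * B + Y - B * A * Y * A * B) ∧
    (fun Y : Matrix (Fin n) (Fin n) ℂ => B * A * B + Y - B * A * Y * A * B) ∘
      (fun Y : Matrix (Fin n) (Fin n) ℂ => B * A * B + Y - B * A * Y * A * B) =
    (fun Y : Matrix (Fin n) (Fin n) ℂ => B * A * B + Y - B * A * Y * A * B) := by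
  have h1 : A * (B * A * B) * A = A := by
    rw [show A * (B * A * B) * A = (A * B * A) * B * A by noncomm_ring, hB, hB]
  have h2 : ∀ Y : Matrix (Fin n) (Fin n) ℂ, A * (B * A * Y * A * B) * A = A * Y * A := by
    intro Y
    rw [show A * (B * A * Y * A * B) * A = (A * B * A) * Y * (A * B * A) by noncomm_ring,
      hB]
  have h3 : ∀ Y : Matrix (Fin n) (Fin n) ℂ,
      B * A * (B * A * B + Y - B * A * Y * A * B) * A * B = B * A * B := by
    intro Y
    calc B * A * (B * A * B + Y - B * A * Y * A * B) * A * B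
        = B * (A * B * A) * B * (A * B) + B * (A * Y * A) * B
            - B * (A * B * A) * Y * (A * B * A * B) := by noncomm_ring
      _ = B * A * B * (A * B) + B * (A * Y * A) * B - B * A * Y * (A * B) := by rw [hB]
      _ = B * (A * B * A) * B + B * A * Y * (A * B) - B * A * Y * (A * B) := by noncomm_ring
      _ = B * A * B + B * A * Y * (A * B) - B * A * Y * (A * B) := by rw [hB]
      _ = B * A * B := by noncomm_ring
  constructor
  · intro X
    constructor
    · intro hX
      refine ⟨X, ?_⟩
      rw [show B * A * X * A * B = B * (A * X * A) * B by noncomm_ring, hX]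
      noncomm_ring
    · rintro ⟨Y, rfl⟩
      rw [mul_sub, mul_add, sub_mul, add_mul, h1, h2]
      abel
  · funext Y
    simp only [Function.comp_apply]
    rw [show B * A * (B * A * B + Y - B * A * Y * A * B) * A * B
        = B * A * ((B * A * B + Y - B * A * Y * A * B)) * A * B by noncomm_ring, h3]
    noncomm_ring
end

section
/- Let A be an m×n complex matrix and c a vector in ℂ^m with c ≠ 0, and suppose the linear system A·x = c is consistent (has at least one solution). Then the solution set of A·x = c is exactly { G·c | G is an n×m complex matrix with A·G·A = A }, i.e. every vector of the form G·c with G a {1}-inverse of A solves the system, and every solution arises as G·c for some {1}-inverse G of A. -/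
/-!
Fix a solution `x₀` and any `{1}`-inverse `G₀` of `A` (one exists over every field: invert `A` on
its range and extend). Then `A (G c) = A G A x₀ = A x₀ = c` for every `{1}`-inverse `G`.
Conversely, given a solution `x`, pick `v` with `v ⬝ᵥ c = 1`, possible as `c ≠ 0`. The rank-one
correction `G = G₀ + (x - G₀ c) vᵀ` is again a `{1}`-inverse, because `x - G₀ c` lies in the
kernel of `A`, and `G c = x`.
-/

theorem LinearMap.exists_comp_comp_eq_self {K V W : Type*} [DivisionRing K]
    [AddCommGroup V] [AddCommGroup W] [Module K V] [Module K W] (f : V →ₗ[K] W) :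
    ∃ g : W →ₗ[K] V, f ∘ₗ g ∘ₗ f = f := by
  obtain ⟨s, hs⟩ := f.rangeRestrict.exists_rightInverse_of_surjective f.range_rangeRestrict
  obtain ⟨g, hg⟩ := LinearMap.exists_extend s
  refine ⟨g, LinearMap.ext fun x => ?_⟩
  have hgx : g (f x) = s (f.rangeRestrict x) := LinearMap.congr_fun hg (f.rangeRestrict x)
  simpa [hgx] using congr_arg Subtype.val (LinearMap.congr_fun hs (f.rangeRestrict x))

theorem exists_dotProduct_eq_one {ι K : Type*} [Fintype ι] [DivisionRing K] {c : ι → K}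
    (hc : c ≠ 0) : ∃ v : ι → K, v ⬝ᵥ c = 1 := by
  classical
  obtain ⟨i, hi⟩ := Function.ne_iff.mp hc
  exact ⟨Pi.single i (c i)⁻¹, by simp [single_dotProduct, inv_mul_cancel₀ hi]⟩

namespace Matrix

variable {m n K : Type*} [Fintype m] [Fintype n] [Field K]

theorem exists_mul_mul_eq_self (A : Matrix m n K) : ∃ G : Matrix n m K, A * G * A = A := by
  classical
  obtain ⟨g, hg⟩ := (toLin' A).exists_comp_comp_eq_self
  refine ⟨LinearMap.toMatrix' g, toLin'.injective ?_⟩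
  simpa [toLin'_mul, LinearMap.comp_assoc] using hg

theorem mulVec_mulVec_eq_of_mul_mul_eq_self {A : Matrix m n K} {G : Matrix n m K}
    (hG : A * G * A = A) {x : n → K} {c : m → K} (hx : A *ᵥ x = c) : A *ᵥ (G *ᵥ c) = c := by
  rw [← hx, mulVec_mulVec, mulVec_mulVec, hG]

theorem exists_mul_mul_eq_self_and_eq_mulVec {A : Matrix m n K} {G₀ : Matrix n m K}
    (hG₀ : A * G₀ * A = A) {x : n → K} {c : m → K} (hc : c ≠ 0) (hx : A *ᵥ x = c) :
    ∃ G : Matrix n m K, A * G * A = A ∧ x = G *ᵥ c := by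
  obtain ⟨v, hv⟩ := exists_dotProduct_eq_one hc
  have hker : A *ᵥ (x - G₀ *ᵥ c) = 0 := by
    rw [mulVec_sub, mulVec_mulVec_eq_of_mul_mul_eq_self hG₀ hx, hx, sub_self]
  refine ⟨G₀ + vecMulVec (x - G₀ *ᵥ c) v, ?_, ?_⟩
  · rw [Matrix.mul_add, Matrix.add_mul, hG₀, mul_vecMulVec, hker, zero_vecMulVec,
      Matrix.zero_mul, add_zero]
  · rw [add_mulVec, vecMulVec_mulVec, hv]
    simp

end Matrix

theorem general_solution_by_one_inverses {m n : ℕ}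
    (A : Matrix (Fin m) (Fin n) ℂ) (c : Fin m → ℂ) (hc : c ≠ 0)
    (hcons : ∃ x : Fin n → ℂ, A.mulVec x = c) :
    {x : Fin n → ℂ | A.mulVec x = c} =
      {x : Fin n → ℂ | ∃ G : Matrix (Fin n) (Fin m) ℂ,
        A * G * A = A ∧ x = G.mulVec c} := by
  obtain ⟨x₀, hx₀⟩ := hcons
  obtain ⟨G₀, hG₀⟩ := A.exists_mul_mul_eq_self
  ext x
  constructor
  · exact Matrix.exists_mul_mul_eq_self_and_eq_mulVec hG₀ hc
  · rintro ⟨G, hG, rfl⟩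
    exact Matrix.mulVec_mulVec_eq_of_mul_mul_eq_self hG hx₀
end

section
/- Let A be a complex matrix indexed as Matrix (k ⊕ μ) (k ⊕ ν) ℂ for finite types k, μ, ν, let Q be an invertible (k ⊕ μ)×(k ⊕ μ) complex matrix and P an invertible (k ⊕ ν)×(k ⊕ ν) complex matrix such that Q·A·P equals the block matrix fromBlocks(I_k, 0, 0, 0), where I_k is the k×k identity matrix. Then a (k ⊕ ν)×(k ⊕ μ) complex matrix G satisfies A·G·A = A if and only if there exist complex matrices U (k×μ), V (ν×k), and W (ν×μ) such that G = P · fromBlocks(I_k, U, V, W) · Q. -/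
theorem rohde_representation {k μ ν : Type*}
    [Fintype k] [Fintype μ] [Fintype ν]
    [DecidableEq k] [DecidableEq μ] [DecidableEq ν]
    (A : Matrix (k ⊕ μ) (k ⊕ ν) ℂ)
    (Q : Matrix (k ⊕ μ) (k ⊕ μ) ℂ) (P : Matrix (k ⊕ ν) (k ⊕ ν) ℂ)
    (hQ : IsUnit Q) (hP : IsUnit P)
    (hQAP : Q * A * P = Matrix.fromBlocks 1 0 0 0) :
    ∀ G : Matrix (k ⊕ ν) (k ⊕ μ) ℂ,
      A * G * A = A ↔ ∃ (U : Matrix k μ ℂ) (V : Matrix ν k ℂ) (W : Matrix ν μ ℂ),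
        G = P * Matrix.fromBlocks 1 U V W * Q := by
  have hQd := (Matrix.isUnit_iff_isUnit_det Q).mp hQ
  have hPd := (Matrix.isUnit_iff_isUnit_det P).mp hP
  have hQQ : Q⁻¹ * Q = 1 := Matrix.nonsing_inv_mul _ hQd
  have hQQ' : Q * Q⁻¹ = 1 := Matrix.mul_nonsing_inv _ hQd
  have hPP : P⁻¹ * P = 1 := Matrix.nonsing_inv_mul _ hPd
  have hPP' : P * P⁻¹ = 1 := Matrix.mul_nonsing_inv _ hPd
  set E : Matrix (k ⊕ μ) (k ⊕ ν) ℂ := Matrix.fromBlocks 1 0 0 0 with hE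
  have hA : A = Q⁻¹ * E * P⁻¹ := by
    have e : Q⁻¹ * (Q * A * P) * P⁻¹ = Q⁻¹ * Q * (A * (P * P⁻¹)) := by
      simp only [Matrix.mul_assoc]
    rw [← hQAP, e, hQQ, hPP', Matrix.one_mul, Matrix.mul_one]
  intro G
  constructor
  · intro h
    set H := P⁻¹ * G * Q⁻¹ with hH
    have hG : G = P * H * Q := by
      rw [hH]
      have e : P * (P⁻¹ * G * Q⁻¹) * Q = P * P⁻¹ * (G * (Q⁻¹ * Q)) := by
        simp only [Matrix.mul_assoc]
      rw [e, hPP', hQQ, Matrix.one_mul, Matrix.mul_one]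
    have key : E * H * E = E := by
      rw [← hQAP, hH]
      calc Q * A * P * (P⁻¹ * G * Q⁻¹) * (Q * A * P)
          = Q * (A * (P * P⁻¹) * (G * ((Q⁻¹ * Q) * (A * P)))) := by
            simp only [Matrix.mul_assoc]
        _ = Q * (A * (G * (A * P))) := by
            rw [hPP', hQQ, Matrix.mul_one, Matrix.one_mul]
        _ = Q * (A * G * A) * P := by simp only [Matrix.mul_assoc]
        _ = Q * A * P := by rw [h, Matrix.mul_assoc]
    have hHb : H = Matrix.fromBlocks H.toBlocks₁₁ H.toBlocks₁₂ H.toBlocks₂₁ H.toBlocks₂₂ :=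
      (Matrix.fromBlocks_toBlocks H).symm
    rw [hE, hHb, Matrix.fromBlocks_multiply, Matrix.fromBlocks_multiply] at key
    have h11 : H.toBlocks₁₁ = 1 := by
      have := congrArg Matrix.toBlocks₁₁ key
      simpa [Matrix.toBlocks_fromBlocks₁₁] using this
    have hHF : H = Matrix.fromBlocks 1 H.toBlocks₁₂ H.toBlocks₂₁ H.toBlocks₂₂ := by
      conv_lhs => rw [hHb]
      rw [h11]
    refine ⟨H.toBlocks₁₂, H.toBlocks₂₁, H.toBlocks₂₂, ?_⟩
    rw [hG]
    conv_lhs => rw [hHF]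
  · rintro ⟨U, V, W, rfl⟩
    set F : Matrix (k ⊕ ν) (k ⊕ μ) ℂ := Matrix.fromBlocks 1 U V W with hF
    have hEFE : E * F * E = E := by
      rw [hE, hF, Matrix.fromBlocks_multiply, Matrix.fromBlocks_multiply]
      simp
    rw [hA]
    calc Q⁻¹ * E * P⁻¹ * (P * F * Q) * (Q⁻¹ * E * P⁻¹)
        = Q⁻¹ * (E * ((P⁻¹ * P) * (F * ((Q * Q⁻¹) * (E * P⁻¹))))) := by
          simp only [Matrix.mul_assoc]
      _ = Q⁻¹ * (E * (F * (E * P⁻¹))) := by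
          rw [hPP, hQQ', Matrix.one_mul, Matrix.one_mul]
      _ = Q⁻¹ * (E * F * E) * P⁻¹ := by simp only [Matrix.mul_assoc]
      _ = Q⁻¹ * E * P⁻¹ := by rw [hEFE, Matrix.mul_assoc]
end
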